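/- arXiv:2501.01605 — 6 statements merged into one kernel-verified Lean document; each statement's English description precedes it below -/
import Mathlib

section
/- For any r_i, r_j > 0 and Θ ∈ (0, π), with c = min(cos Θ, 0), the hyperbolic edge length l defined by cosh l = cosh r_i cosh r_j + sinh r_i sinh r_j cos Θ satisfies l ≥ r_i + r_j − log(4/(1+c)). -/
open Real

theorem hyperbolic_length_lower_bound
    (ri rj Θ l : ℝ) (hri : 0 < ri) (hrj : 0 < rj)
    (hΘ : Θ ∈ Set.Ioo 0 π)
    (c : ℝ) (hc : c = min (Real.cos Θ) 0)
    (hl : Real.cosh l = Real.cosh ri * Real.cosh rj + Real.sinh ri * Real.sinh rj * Real.cos Θ)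
    (hl0 : 0 ≤ l) :
    l ≥ ri + rj - Real.log (4 / (1 + c)) := by
  obtain ⟨hΘ0, hΘπ⟩ := hΘ
  have hcos : (-1 : ℝ) < Real.cos Θ := by
    have := Real.cos_lt_cos_of_nonneg_of_le_pi (le_of_lt hΘ0) le_rfl hΘπ
    simpa [Real.cos_pi] using this
  have hc1 : (0 : ℝ) < 1 + c := by
    rw [hc]
    rcases le_total (Real.cos Θ) 0 with h | h
    · simp [min_eq_left h]; linarith
    · simp [min_eq_right h]
  have hcle : c ≤ Real.cos Θ := hc ▸ min_le_left _ _
  have hcle0 : c ≤ 0 := hc ▸ min_le_right _ _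
  have hS : 0 < Real.sinh ri * Real.sinh rj :=
    mul_pos (Real.sinh_pos_iff.mpr hri) (Real.sinh_pos_iff.mpr hrj)
  have h1 : Real.cosh ri * Real.cosh rj + Real.sinh ri * Real.sinh rj * c ≤ Real.cosh l := by
    rw [hl]
    have := mul_le_mul_of_nonneg_left hcle (le_of_lt hS)
    linarith
  have hid : Real.cosh ri * Real.cosh rj + Real.sinh ri * Real.sinh rj * c
      = (1 + c) / 2 * Real.cosh (ri + rj) + (1 - c) / 2 * Real.cosh (ri - rj) := by
    rw [Real.cosh_add, Real.cosh_sub]; ring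
  have h2 : (1 + c) / 2 * Real.cosh (ri + rj) ≤ Real.cosh l := by
    have hpos : 0 ≤ (1 - c) / 2 * Real.cosh (ri - rj) := by
      have := Real.cosh_pos (x := ri - rj)
      nlinarith
    linarith [hid ▸ h1]
  have h3 : (1 + c) / 4 * Real.exp (ri + rj) ≤ Real.cosh l := by
    have hch : Real.exp (ri + rj) / 2 ≤ Real.cosh (ri + rj) := by
      rw [Real.cosh_eq]
      have := Real.exp_pos (-(ri + rj))
      linarith
    have := mul_le_mul_of_nonneg_left hch (by linarith : (0:ℝ) ≤ (1 + c) / 2)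
    nlinarith
  have h4 : Real.cosh l ≤ Real.exp l := by
    rw [Real.cosh_eq]
    have : Real.exp (-l) ≤ Real.exp l := Real.exp_le_exp.mpr (by linarith)
    linarith
  have h5 : (1 + c) / 4 * Real.exp (ri + rj) ≤ Real.exp l := le_trans h3 h4
  have h6 : Real.log ((1 + c) / 4 * Real.exp (ri + rj)) ≤ l := by
    have := Real.log_le_log (by positivity) h5
    simpa [Real.log_exp] using this
  have h7 : Real.log ((1 + c) / 4 * Real.exp (ri + rj))
      = Real.log ((1 + c) / 4) + (ri + rj) := by
    rw [Real.log_mul (by positivity) (Real.exp_ne_zero _), Real.log_exp]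
  have h8 : Real.log ((1 + c) / 4) = - Real.log (4 / (1 + c)) := by
    rw [← Real.log_inv]
    congr 1
    field_simp
  rw [h7, h8] at h6
  linarith
end

section
/- In a Euclidean triangle with vertices i, j, τ* where the side from τ* to i has length r_i, the side from τ* to j has length r_j, and the angle at τ* equals π − Θ with Θ ∈ (0,π), the inner angle θ_i at vertex i satisfies r_j · ∂θ_i/∂r_j = r_i · ∂θ_j/∂r_i, and both equal d/l > 0, where l is the length of side ij and d is the distance from τ* to the line through i and j. -/
open Real

noncomputable def eL (Θ ri rj : ℝ) : ℝ := Real.sqrt (ri ^ 2 + rj ^ 2 + 2 * ri * rj * Real.cos Θ)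

/-- Inner angle at vertex `i` of the Euclidean triangle with sides `ri, rj` from the apex
`τ*`, apex angle `π − Θ`, opposite side `eL Θ ri rj` (law of cosines). -/
noncomputable def eθi (Θ ri rj : ℝ) : ℝ :=
  Real.arccos ((ri ^ 2 + (eL Θ ri rj) ^ 2 - rj ^ 2) / (2 * ri * eL Θ ri rj))

noncomputable def eθj (Θ ri rj : ℝ) : ℝ :=
  Real.arccos ((rj ^ 2 + (eL Θ ri rj) ^ 2 - ri ^ 2) / (2 * rj * eL Θ ri rj))

/-! Since the apex angle is `π − Θ`, the side `ij` has components `a + b cos Θ` along the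
line `τ* i` and `b sin Θ` across it, so `cos θᵢ = (a + b cos Θ) / l` and `sin θᵢ = b sin Θ / l`.
Differentiating `arccos` of the first gives `∂θᵢ/∂b = a sin Θ / l²`, which is symmetric in
`a, b`; multiplying by `b` yields `a b sin Θ / l² = d / l`. -/

lemma sq_add_sq_add_two_mul_mul_cos (a b Θ : ℝ) :
    a ^ 2 + b ^ 2 + 2 * a * b * cos Θ = (a + b * cos Θ) ^ 2 + (b * sin Θ) ^ 2 := by
  linear_combination -b ^ 2 * sin_sq_add_cos_sq Θ

lemma eL_sq (Θ a b : ℝ) : eL Θ a b ^ 2 = a ^ 2 + b ^ 2 + 2 * a * b * cos Θ := by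
  rw [eL, sq_sqrt (by rw [sq_add_sq_add_two_mul_mul_cos]; positivity)]

lemma eL_pos {Θ b : ℝ} (a : ℝ) (hb : b ≠ 0) (hs : sin Θ ≠ 0) : 0 < eL Θ a b := by
  rw [eL, sqrt_pos, sq_add_sq_add_two_mul_mul_cos]
  have : 0 < (b * sin Θ) ^ 2 := by positivity
  positivity

lemma eL_comm (Θ a b : ℝ) : eL Θ a b = eL Θ b a := by
  rw [eL, eL]
  ring_nf

lemma eθj_eq_eθi_swap (Θ a b : ℝ) : eθj Θ a b = eθi Θ b a := by
  rw [eθj, eθi, eL_comm]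

lemma eθi_eq_arccos {Θ a : ℝ} (ha : a ≠ 0) (b : ℝ) :
    eθi Θ a b = arccos ((a + b * cos Θ) / eL Θ a b) := by
  rw [eθi, eL_sq, show a ^ 2 + (a ^ 2 + b ^ 2 + 2 * a * b * cos Θ) - b ^ 2 = 2 * a * (a + b * cos Θ) by ring,
    mul_div_mul_left _ _ (mul_ne_zero two_ne_zero ha)]

lemma one_sub_sq_div_eL {Θ a b : ℝ} (hL : eL Θ a b ≠ 0) :
    1 - ((a + b * cos Θ) / eL Θ a b) ^ 2 = (b * sin Θ / eL Θ a b) ^ 2 := by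
  field_simp
  linear_combination eL_sq Θ a b + sq_add_sq_add_two_mul_mul_cos a b Θ

lemma hasDerivAt_eL {Θ a b : ℝ} (hL : eL Θ a b ≠ 0) :
    HasDerivAt (eL Θ a) ((b + a * cos Θ) / eL Θ a b) b := by
  have hQ : HasDerivAt (fun y => a ^ 2 + y ^ 2 + 2 * a * y * cos Θ) (2 * b + 2 * a * cos Θ) b := by
    refine (((hasDerivAt_pow 2 b).const_add (a ^ 2)).add
      (((hasDerivAt_id' b).const_mul (2 * a)).mul_const (cos Θ))).congr_deriv ?_
    push_cast
    ring
  have h := hQ.sqrt (by rw [← eL_sq]; exact pow_ne_zero 2 hL)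
  rwa [show 2 * b + 2 * a * cos Θ = 2 * (b + a * cos Θ) by ring,
    mul_div_mul_left _ _ two_ne_zero] at h

lemma hasDerivAt_eθi {Θ a b : ℝ} (ha : a ≠ 0) (hb : 0 < b) (hs : 0 < sin Θ) :
    HasDerivAt (eθi Θ a) (a * sin Θ / eL Θ a b ^ 2) b := by
  have hL := eL_pos a hb.ne' hs.ne'
  have hcos : HasDerivAt (fun y => (a + y * cos Θ) / eL Θ a y)
      (-(a * b * sin Θ ^ 2) / eL Θ a b ^ 3) b := by
    refine ((((hasDerivAt_id' b).mul_const (cos Θ)).const_add a).div (hasDerivAt_eL hL.ne')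
      hL.ne').congr_deriv ?_
    field_simp
    linear_combination cos Θ * eL_sq Θ a b + a * b * sin_sq_add_cos_sq Θ
  have hsin : 1 - ((a + b * cos Θ) / eL Θ a b) ^ 2 = (b * sin Θ / eL Θ a b) ^ 2 :=
    one_sub_sq_div_eL hL.ne'
  have hcos_lt : |(a + b * cos Θ) / eL Θ a b| < 1 := by
    rw [← sq_lt_one_iff_abs_lt_one, ← sub_pos, hsin]
    positivity
  rw [funext (eθi_eq_arccos ha)]
  obtain ⟨hgt, hlt⟩ := abs_lt.1 hcos_lt
  refine ((hasDerivAt_arccos hgt.ne' hlt.ne).comp b hcos).congr_deriv ?_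
  rw [hsin, sqrt_sq (by positivity)]
  field_simp

theorem euclidean_angle_derivative_symmetry
    (ri rj Θ : ℝ) (hri : 0 < ri) (hrj : 0 < rj)
    (hΘ : Θ ∈ Set.Ioo 0 π)
    (d l : ℝ) (hl : l = eL Θ ri rj) (hd : d = ri * rj * Real.sin Θ / l) :
    rj * deriv (fun y => eθi Θ ri y) rj = d / l ∧
    ri * deriv (fun x => eθj Θ x rj) ri = d / l ∧
    0 < d / l := by
  have hs : 0 < sin Θ := sin_pos_of_pos_of_lt_pi hΘ.1 hΘ.2
  have hlpos : 0 < l := hl ▸ eL_pos ri hrj.ne' hs.ne'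
  have hdl : d / l = ri * rj * sin Θ / l ^ 2 := by rw [hd, div_div, sq]
  have hswap : (fun x => eθj Θ x rj) = eθi Θ rj := funext fun x => eθj_eq_eθi_swap Θ x rj
  refine ⟨?_, ?_, by rw [hdl]; positivity⟩
  · rw [(hasDerivAt_eθi hri.ne' hrj hs).deriv, hdl, hl]
    ring
  · rw [hswap, (hasDerivAt_eθi hrj.ne' hri hs).deriv, hdl, hl, eL_comm]
    ring
end

section
/- In a hyperbolic triangle with sides r_i, r_j meeting at angle π − Θ (Θ ∈ (0,π) fixed) and opposite side l, the inner angles satisfy sinh r_j · ∂θ_i/∂r_j = sinh r_i · ∂θ_j/∂r_i. -/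
/-!
With `C = cosh l = hC Θ ri rj`, the law of cosines simplifies to
`θ_i = arccos (∂C/∂ri / √(C² - 1))`, and `C² - 1 - (∂C/∂ri)² = (sinh rj · sin Θ)²`.
Differentiating in `rj` gives
`sinh rj · ∂θ_i/∂rj = -(C_ij (C² - 1) - C C_i C_j) / ((C² - 1) sin Θ) = -sinh l · ∂²l/∂ri∂rj / sin Θ`,
which is symmetric in `i` and `j`.
-/

open Real

noncomputable def arcosh (x : ℝ) : ℝ := Real.log (x + Real.sqrt (x ^ 2 - 1))

/-- cosh of the side opposite the apex in the hyperbolic two-circle triangle. -/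
noncomputable def hC (Θ ri rj : ℝ) : ℝ :=
  Real.cosh ri * Real.cosh rj + Real.sinh ri * Real.sinh rj * Real.cos Θ

noncomputable def hL (Θ ri rj : ℝ) : ℝ := _root_.arcosh (hC Θ ri rj)

/-- Inner angle at vertex `i` of the hyperbolic triangle with side lengths `ri, rj`
adjacent to the apex angle `π − Θ`, via the hyperbolic law of cosines. -/
noncomputable def hθi (Θ ri rj : ℝ) : ℝ :=
  Real.arccos ((Real.cosh ri * Real.cosh (hL Θ ri rj) - Real.cosh rj) /
    (Real.sinh ri * Real.sinh (hL Θ ri rj)))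

noncomputable def hθj (Θ ri rj : ℝ) : ℝ :=
  Real.arccos ((Real.cosh rj * Real.cosh (hL Θ ri rj) - Real.cosh ri) /
    (Real.sinh rj * Real.sinh (hL Θ ri rj)))

open Filter Topology

/-- `hC₁ Θ ri rj = ∂ hC / ∂ ri` and `hC₁₂ Θ ri rj = ∂² hC / ∂ ri ∂ rj`; by symmetry of `hC`,
`∂ hC / ∂ rj = hC₁ Θ rj ri`. -/
noncomputable def hC₁ (Θ ri rj : ℝ) : ℝ :=
  sinh ri * cosh rj + cosh ri * sinh rj * cos Θ

noncomputable def hC₁₂ (Θ ri rj : ℝ) : ℝ :=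
  sinh ri * sinh rj + cosh ri * cosh rj * cos Θ

lemma hC_comm (Θ ri rj : ℝ) : hC Θ ri rj = hC Θ rj ri := by
  unfold hC; ring

lemma hC₁₂_comm (Θ ri rj : ℝ) : hC₁₂ Θ ri rj = hC₁₂ Θ rj ri := by
  unfold hC₁₂; ring

lemma hL_eq_arcosh (Θ ri rj : ℝ) : hL Θ ri rj = Real.arcosh (hC Θ ri rj) := rfl

lemma hθj_eq_hθi (Θ ri rj : ℝ) : hθj Θ ri rj = hθi Θ rj ri := by
  rw [hθj, hθi, hL, hL, hC_comm]

lemma hasDerivAt_hC (Θ ri y : ℝ) : HasDerivAt (hC Θ ri) (hC₁ Θ y ri) y := by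
  have h := ((hasDerivAt_cosh y).const_mul (cosh ri)).add
    (((hasDerivAt_sinh y).const_mul (sinh ri)).mul_const (cos Θ))
  exact h.congr_deriv (by unfold hC₁; ring)

lemma hasDerivAt_hC₁ (Θ ri y : ℝ) : HasDerivAt (hC₁ Θ ri) (hC₁₂ Θ ri y) y := by
  have h := ((hasDerivAt_cosh y).const_mul (sinh ri)).add
    (((hasDerivAt_sinh y).const_mul (cosh ri)).mul_const (cos Θ))
  exact h.congr_deriv (by unfold hC₁₂; ring)

lemma one_lt_hC {Θ ri rj : ℝ} (hri : 0 < ri) (hrj : 0 < rj) (hΘ : -1 < cos Θ) :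
    1 < hC Θ ri rj := by
  have hsinh : 0 < sinh ri * sinh rj := mul_pos (sinh_pos_iff.2 hri) (sinh_pos_iff.2 hrj)
  have hC_eq : hC Θ ri rj = cosh (ri - rj) + sinh ri * sinh rj * (1 + cos Θ) := by
    rw [hC, cosh_sub]; ring
  rw [hC_eq]
  nlinarith [one_le_cosh (ri - rj)]

lemma hC_sq_sub_one_sub_hC₁_sq (Θ ri rj : ℝ) :
    hC Θ ri rj ^ 2 - 1 - hC₁ Θ ri rj ^ 2 = (sinh rj * sin Θ) ^ 2 := by
  unfold hC hC₁
  linear_combination (cosh rj ^ 2 - sinh rj ^ 2 * cos Θ ^ 2) * cosh_sq_sub_sinh_sq ri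
    + cosh_sq_sub_sinh_sq rj - sinh rj ^ 2 * sin_sq_add_cos_sq Θ

lemma hθi_eq_arccos {Θ ri y : ℝ} (hri : 0 < ri) (hy : 0 < y) (hΘ : -1 < cos Θ) :
    hθi Θ ri y = arccos (hC₁ Θ ri y / √(hC Θ ri y ^ 2 - 1)) := by
  have hC_ge : 1 ≤ hC Θ ri y := (one_lt_hC hri hy hΘ).le
  have hnum : cosh ri * hC Θ ri y - cosh y = sinh ri * hC₁ Θ ri y := by
    unfold hC hC₁
    linear_combination cosh y * cosh_sq_sub_sinh_sq ri
  rw [hθi, hL_eq_arcosh, cosh_arcosh hC_ge, sinh_arcosh hC_ge, hnum,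
    mul_div_mul_left _ _ (sinh_pos_iff.2 hri).ne']

lemma hasDerivAt_hθi {Θ ri rj : ℝ} (hri : 0 < ri) (hrj : 0 < rj) (hΘ : 0 < sin Θ) :
    HasDerivAt (hθi Θ ri)
      (-(hC₁₂ Θ ri rj * (hC Θ ri rj ^ 2 - 1) - hC Θ ri rj * hC₁ Θ ri rj * hC₁ Θ rj ri) /
        ((hC Θ ri rj ^ 2 - 1) * (sinh rj * sin Θ))) rj := by
  have hcos : -1 < cos Θ := by nlinarith [sin_sq_add_cos_sq Θ]
  have hD : 0 < hC Θ ri rj ^ 2 - 1 := by nlinarith [one_lt_hC hri hrj hcos]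
  have hs : 0 < √(hC Θ ri rj ^ 2 - 1) := sqrt_pos.2 hD
  have hs_sq : √(hC Θ ri rj ^ 2 - 1) ^ 2 = hC Θ ri rj ^ 2 - 1 := sq_sqrt hD.le
  set u := hC₁ Θ ri rj / √(hC Θ ri rj ^ 2 - 1)
  have hone_sub : 1 - u ^ 2 = (sinh rj * sin Θ / √(hC Θ ri rj ^ 2 - 1)) ^ 2 := by
    rw [div_pow, div_pow, hs_sq, ← hC_sq_sub_one_sub_hC₁_sq]
    field_simp
  have hu_sq : u ^ 2 < 1 := by
    have : 0 < (sinh rj * sin Θ / √(hC Θ ri rj ^ 2 - 1)) ^ 2 := by positivity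
    linarith
  have hu : HasDerivAt (fun y => hC₁ Θ ri y / √(hC Θ ri y ^ 2 - 1))
      ((hC₁₂ Θ ri rj * √(hC Θ ri rj ^ 2 - 1) - hC₁ Θ ri rj *
        (2 * hC Θ ri rj * hC₁ Θ rj ri / (2 * √(hC Θ ri rj ^ 2 - 1)))) /
        √(hC Θ ri rj ^ 2 - 1) ^ 2) rj := by
    refine (hasDerivAt_hC₁ Θ ri rj).div ?_ hs.ne'
    have hD' := (((hasDerivAt_hC Θ ri rj).pow 2).sub_const 1).sqrt hD.ne'
    simpa using hD'
  have hu_abs := abs_lt.1 ((sq_lt_one_iff_abs_lt_one u).1 hu_sq)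
  have harccos := (hasDerivAt_arccos hu_abs.1.ne' hu_abs.2.ne).comp rj hu
  have hθi_eventually : (fun y => arccos (hC₁ Θ ri y / √(hC Θ ri y ^ 2 - 1))) =ᶠ[𝓝 rj]
      hθi Θ ri := by
    filter_upwards [Ioi_mem_nhds hrj] with y hy
    exact (hθi_eq_arccos hri hy hcos).symm
  refine (harccos.congr_of_eventuallyEq hθi_eventually.symm).congr_deriv ?_
  rw [hone_sub, sqrt_sq (by positivity)]
  field_simp
  rw [hs_sq]

lemma sinh_mul_deriv_hθi {Θ ri rj : ℝ} (hri : 0 < ri) (hrj : 0 < rj) (hΘ : 0 < sin Θ) :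
    sinh rj * deriv (hθi Θ ri) rj =
      -(hC₁₂ Θ ri rj * (hC Θ ri rj ^ 2 - 1) - hC Θ ri rj * hC₁ Θ ri rj * hC₁ Θ rj ri) /
        ((hC Θ ri rj ^ 2 - 1) * sin Θ) := by
  rw [(hasDerivAt_hθi hri hrj hΘ).deriv]
  field_simp

theorem hyperbolic_angle_derivative_symmetry
    (ri rj Θ : ℝ) (hri : 0 < ri) (hrj : 0 < rj)
    (hΘ : Θ ∈ Set.Ioo 0 π) :
    Real.sinh rj * deriv (fun y => hθi Θ ri y) rj =
      Real.sinh ri * deriv (fun x => hθj Θ x rj) ri := by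
  have hsin : 0 < sin Θ := sin_pos_of_pos_of_lt_pi hΘ.1 hΘ.2
  simp only [hθj_eq_hθi]
  rw [sinh_mul_deriv_hθi hri hrj hsin, sinh_mul_deriv_hθi hrj hri hsin, hC_comm Θ rj ri,
    hC₁₂_comm Θ rj ri]
  ring
end

section
/- In the hyperbolic two-circle triangle, the hyperbolic sine law sinh l · sin θ_i = sinh r_j · sin Θ holds, and differentiating with respect to r_i yields sinh r_i · ∂θ_i/∂r_i = −cosh l · sinh r_j · ∂θ_i/∂r_j. -/
open Real

/-!
Writing `X = sinh rᵢ cosh rⱼ + cosh rᵢ sinh rⱼ cos Θ` and `Y = sinh rⱼ sin Θ`, one has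
`cosh² l - 1 = X² + Y²`, and the law of cosines gives `cos θᵢ = X / √(X² + Y²)`; so `(X, Y)` is
`sinh l · (cos θᵢ, sin θᵢ)`. The sine law is the second coordinate, and `θᵢ = π/2 - arctan (X/Y)`.
Since `∂X/∂rᵢ = cosh l` and `∂(X/Y)/∂rⱼ = -sinh rᵢ sin Θ / Y²`, the cotangent `X/Y` satisfies
`sinh rᵢ · ∂ᵢ(X/Y) = -cosh l · sinh rⱼ · ∂ⱼ(X/Y)`, and composing with `π/2 - arctan` preserves this
linear relation between the two partial derivatives.
-/

open Set Filter Topology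

namespace Real

theorem sqrt_sq_add_sq_eq_mul_sqrt (a : ℝ) {b : ℝ} (hb : 0 < b) :
    √(a ^ 2 + b ^ 2) = b * √(1 + (a / b) ^ 2) := by
  have h : a ^ 2 + b ^ 2 = b ^ 2 * (1 + (a / b) ^ 2) := by
    field_simp
    ring
  rw [h, sqrt_mul (sq_nonneg b), sqrt_sq hb.le]

theorem arccos_div_sqrt_sq_add_sq (a : ℝ) {b : ℝ} (hb : 0 < b) :
    arccos (a / √(a ^ 2 + b ^ 2)) = π / 2 - arctan (a / b) := by
  rw [arccos_eq_pi_div_two_sub_arcsin, arctan_eq_arcsin, sqrt_sq_add_sq_eq_mul_sqrt a hb,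
    div_mul_eq_div_div]

theorem sqrt_sq_add_sq_mul_sin_pi_div_two_sub_arctan (a : ℝ) {b : ℝ} (hb : 0 < b) :
    √(a ^ 2 + b ^ 2) * sin (π / 2 - arctan (a / b)) = b := by
  have hpos : 0 < √(1 + (a / b) ^ 2) := sqrt_pos.2 (by positivity)
  rw [sin_pi_div_two_sub, cos_arctan, sqrt_sq_add_sq_eq_mul_sqrt a hb]
  field_simp

end Real

noncomputable def hX (Θ x y : ℝ) : ℝ := sinh x * cosh y + cosh x * sinh y * cos Θ

noncomputable def hY (Θ y : ℝ) : ℝ := sinh y * sin Θ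

section

variable {Θ x y : ℝ}

theorem one_lt_hC_s7 (hx : 0 < x) (hy : 0 < y) (hΘ : Θ ∈ Ioo 0 π) : 1 < hC Θ x y := by
  have hcos : -1 < cos Θ := by
    simpa [cos_pi] using cos_lt_cos_of_nonneg_of_le_pi hΘ.1.le le_rfl hΘ.2
  have hsinh : 0 < sinh x * sinh y := mul_pos (sinh_pos_iff.2 hx) (sinh_pos_iff.2 hy)
  have hsub : 1 ≤ cosh x * cosh y - sinh x * sinh y := cosh_sub x y ▸ one_le_cosh _
  unfold hC
  nlinarith

theorem hY_pos (hy : 0 < y) (hΘ : Θ ∈ Ioo 0 π) : 0 < hY Θ y :=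
  mul_pos (sinh_pos_iff.2 hy) (sin_pos_of_pos_of_lt_pi hΘ.1 hΘ.2)

theorem hC_sq_sub_one (Θ x y : ℝ) : hC Θ x y ^ 2 - 1 = hX Θ x y ^ 2 + hY Θ y ^ 2 := by
  unfold hC hX hY
  linear_combination (cosh y ^ 2 - sinh y ^ 2 * cos Θ ^ 2) * cosh_sq x +
    cosh_sq y - sinh y ^ 2 * sin_sq_add_cos_sq Θ

theorem cosh_hL (h : 1 ≤ hC Θ x y) : cosh (hL Θ x y) = hC Θ x y :=
  Real.cosh_arcosh h

theorem sinh_hL (h : 1 ≤ hC Θ x y) : sinh (hL Θ x y) = √(hX Θ x y ^ 2 + hY Θ y ^ 2) := by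
  rw [← hC_sq_sub_one]
  exact Real.sinh_arcosh h

theorem hθi_eq_arccos_s7 (hx : x ≠ 0) (h : 1 ≤ hC Θ x y) :
    hθi Θ x y = arccos (hX Θ x y / √(hX Θ x y ^ 2 + hY Θ y ^ 2)) := by
  have hnum : cosh x * hC Θ x y - cosh y = sinh x * hX Θ x y := by
    unfold hC hX
    linear_combination cosh y * cosh_sq x
  rw [hθi, cosh_hL h, sinh_hL h, hnum, mul_div_mul_left _ _ (sinh_ne_zero.2 hx)]

theorem hθi_eq_pi_div_two_sub_arctan (hx : 0 < x) (hy : 0 < y) (hΘ : Θ ∈ Ioo 0 π) :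
    hθi Θ x y = π / 2 - arctan (hX Θ x y / hY Θ y) := by
  rw [hθi_eq_arccos_s7 hx.ne' (one_lt_hC_s7 hx hy hΘ).le,
    arccos_div_sqrt_sq_add_sq _ (hY_pos hy hΘ)]

theorem sinh_hL_mul_sin_hθi (hx : 0 < x) (hy : 0 < y) (hΘ : Θ ∈ Ioo 0 π) :
    sinh (hL Θ x y) * sin (hθi Θ x y) = hY Θ y := by
  rw [sinh_hL (one_lt_hC_s7 hx hy hΘ).le, hθi_eq_pi_div_two_sub_arctan hx hy hΘ,
    sqrt_sq_add_sq_mul_sin_pi_div_two_sub_arctan _ (hY_pos hy hΘ)]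

theorem hasDerivAt_hX_div_hY_fst (Θ x y : ℝ) :
    HasDerivAt (fun x => hX Θ x y / hY Θ y) (hC Θ x y / hY Θ y) x := by
  have hX' := ((hasDerivAt_sinh x).mul_const (cosh y)).fun_add
    (((hasDerivAt_cosh x).mul_const (sinh y)).mul_const (cos Θ))
  exact hX'.div_const (hY Θ y)

theorem hasDerivAt_hX_div_hY_snd (hY0 : hY Θ y ≠ 0) :
    HasDerivAt (fun y => hX Θ x y / hY Θ y) (-(sinh x * sin Θ) / hY Θ y ^ 2) y := by
  have hX' := ((hasDerivAt_cosh y).const_mul (sinh x)).fun_add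
    (((hasDerivAt_sinh y).const_mul (cosh x)).mul_const (cos Θ))
  have hY' := (hasDerivAt_sinh y).mul_const (sin Θ)
  refine (hX'.div hY' hY0).congr_deriv ?_
  rw [hY]
  congr 1
  linear_combination -(sin Θ * sinh x) * cosh_sq y

theorem hasDerivAt_hθi_fst (hx : 0 < x) (hy : 0 < y) (hΘ : Θ ∈ Ioo 0 π) :
    HasDerivAt (fun x => hθi Θ x y)
      (-(1 / (1 + (hX Θ x y / hY Θ y) ^ 2) * (hC Θ x y / hY Θ y))) x := by
  refine ((hasDerivAt_hX_div_hY_fst Θ x y).arctan.const_sub (π / 2)).congr_of_eventuallyEq ?_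
  filter_upwards [Ioi_mem_nhds hx] with x' hx'
  exact hθi_eq_pi_div_two_sub_arctan hx' hy hΘ

theorem hasDerivAt_hθi_snd (hx : 0 < x) (hy : 0 < y) (hΘ : Θ ∈ Ioo 0 π) :
    HasDerivAt (fun y => hθi Θ x y)
      (-(1 / (1 + (hX Θ x y / hY Θ y) ^ 2) * (-(sinh x * sin Θ) / hY Θ y ^ 2))) y := by
  refine ((hasDerivAt_hX_div_hY_snd (hY_pos hy hΘ).ne').arctan.const_sub
    (π / 2)).congr_of_eventuallyEq ?_
  filter_upwards [Ioi_mem_nhds hy] with y' hy'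
  exact hθi_eq_pi_div_two_sub_arctan hx hy' hΘ

end

theorem hyperbolic_sine_law_and_derivative
    (ri rj Θ : ℝ) (hri : 0 < ri) (hrj : 0 < rj)
    (hΘ : Θ ∈ Set.Ioo 0 π) :
    Real.sinh (hL Θ ri rj) * Real.sin (hθi Θ ri rj) = Real.sinh rj * Real.sin Θ ∧
    Real.sinh ri * deriv (fun x => hθi Θ x rj) ri =
      -Real.cosh (hL Θ ri rj) * (Real.sinh rj * deriv (fun y => hθi Θ ri y) rj) := by
  refine ⟨sinh_hL_mul_sin_hθi hri hrj hΘ, ?_⟩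
  rw [(hasDerivAt_hθi_fst hri hrj hΘ).deriv, (hasDerivAt_hθi_snd hri hrj hΘ).deriv,
    cosh_hL (one_lt_hC_s7 hri hrj hΘ).le]
  have hY0 := (hY_pos hrj hΘ).ne'
  have hden : 1 + (hX Θ ri rj / hY Θ rj) ^ 2 ≠ 0 := by positivity
  field_simp
  rw [hY]
  ring
end

section
/- In the hyperbolic two-circle triangle with fixed Θ ∈ (0,π), for every ε > 0 there exists L > 0 such that for all r_j > 0, whenever r_i > L the inner angle θ_i is smaller than ε. -/
/-! By the hyperbolic laws of cosines and sines, `tan θ_i = sinh r_j sin Θ / A` with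
`A = sinh r_i cosh r_j + cos Θ cosh r_i sinh r_j ≥ sinh r_j (sinh r_i + cos Θ cosh r_i)`.
Hence `θ_i ≤ tan θ_i ≤ sin Θ / (sinh r_i + cos Θ cosh r_i)` uniformly in `r_j`, and the
right-hand side tends to `0` as `r_i → ∞` because `cos Θ > -1`. -/

open Real

open Filter Topology

lemma hC_sq_sub_one_s10 (Θ ri rj : ℝ) :
    hC Θ ri rj ^ 2 - 1 =
      (sinh ri * cosh rj + cos Θ * cosh ri * sinh rj) ^ 2 + (sinh rj * sin Θ) ^ 2 := by
  rw [hC]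
  linear_combination (cosh rj ^ 2 - cos Θ ^ 2 * sinh rj ^ 2) * cosh_sq_sub_sinh_sq ri +
    cosh_sq_sub_sinh_sq rj - sinh rj ^ 2 * sin_sq_add_cos_sq Θ

lemma cosh_mul_hC_sub_cosh (Θ ri rj : ℝ) :
    cosh ri * hC Θ ri rj - cosh rj =
      sinh ri * (sinh ri * cosh rj + cos Θ * cosh ri * sinh rj) := by
  rw [hC]
  linear_combination cosh rj * cosh_sq_sub_sinh_sq ri

lemma one_le_hC (Θ : ℝ) {ri rj : ℝ} (hri : 0 ≤ ri) (hrj : 0 ≤ rj) : 1 ≤ hC Θ ri rj := by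
  have hsinh : 0 ≤ sinh ri * sinh rj :=
    mul_nonneg (sinh_nonneg_iff.mpr hri) (sinh_nonneg_iff.mpr hrj)
  calc 1 ≤ cosh (ri - rj) := one_le_cosh _
    _ = cosh ri * cosh rj - sinh ri * sinh rj := cosh_sub ri rj
    _ ≤ hC Θ ri rj := by rw [hC]; nlinarith [neg_one_le_cos Θ]

lemma hθi_eq_arccos_s10 {Θ ri rj : ℝ} (hri : 0 < ri) (hrj : 0 ≤ rj) :
    hθi Θ ri rj =
      arccos ((sinh ri * cosh rj + cos Θ * cosh ri * sinh rj) /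
        √((sinh ri * cosh rj + cos Θ * cosh ri * sinh rj) ^ 2 + (sinh rj * sin Θ) ^ 2)) := by
  have hC1 := one_le_hC Θ hri.le hrj
  -- `_root_.arcosh` is definitionally Mathlib's `Real.arcosh`.
  have hcosh : cosh (hL Θ ri rj) = hC Θ ri rj := Real.cosh_arcosh hC1
  have hsinh : sinh (hL Θ ri rj) = √(hC Θ ri rj ^ 2 - 1) := Real.sinh_arcosh hC1
  rw [hθi, hcosh, hsinh, cosh_mul_hC_sub_cosh, hC_sq_sub_one_s10,
    mul_div_mul_left _ _ (sinh_pos_iff.mpr hri).ne']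

lemma arccos_div_sqrt_sq_add_sq_le {a b : ℝ} (ha : 0 < a) (hb : 0 ≤ b) :
    arccos (a / √(a ^ 2 + b ^ 2)) ≤ b / a := by
  have hsqrt : √(1 + (b / a) ^ 2) = √(a ^ 2 + b ^ 2) / a := by
    rw [show 1 + (b / a) ^ 2 = (a ^ 2 + b ^ 2) / a ^ 2 by field_simp, sqrt_div',
      sqrt_sq ha.le]
    positivity
  have harctan : arctan (b / a) = arccos (a / √(a ^ 2 + b ^ 2)) := by
    rw [arctan_eq_arccos (by positivity), hsqrt, inv_div]
  rw [← harctan]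
  calc arctan (b / a) ≤ tan (arctan (b / a)) :=
        le_tan (arctan_nonneg.mpr (by positivity)) (arctan_lt_pi_div_two _)
    _ = b / a := tan_arctan _

lemma sinh_mul_sinh_add_mul_cosh_le (c : ℝ) {ri : ℝ} (hri : 0 ≤ ri) (rj : ℝ) :
    sinh rj * (sinh ri + c * cosh ri) ≤ sinh ri * cosh rj + c * cosh ri * sinh rj := by
  have : sinh rj ≤ cosh rj := (sinh_lt_cosh rj).le
  nlinarith [sinh_nonneg_iff.mpr hri]

lemma hθi_le {Θ ri rj : ℝ} (hΘ : 0 ≤ sin Θ) (hri : 0 < ri) (hrj : 0 < rj)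
    (hD : 0 < sinh ri + cos Θ * cosh ri) :
    hθi Θ ri rj ≤ sin Θ / (sinh ri + cos Θ * cosh ri) := by
  have hsinh : 0 < sinh rj := sinh_pos_iff.mpr hrj
  have hA := sinh_mul_sinh_add_mul_cosh_le (cos Θ) hri.le rj
  rw [hθi_eq_arccos_s10 hri hrj.le]
  calc _ ≤ sinh rj * sin Θ / (sinh ri * cosh rj + cos Θ * cosh ri * sinh rj) :=
        arccos_div_sqrt_sq_add_sq_le ((mul_pos hsinh hD).trans_le hA) (by positivity)
    _ ≤ sinh rj * sin Θ / (sinh rj * (sinh ri + cos Θ * cosh ri)) :=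
        div_le_div_of_nonneg_left (by positivity) (by positivity) hA
    _ = sin Θ / (sinh ri + cos Θ * cosh ri) := mul_div_mul_left _ _ hsinh.ne'

lemma tendsto_sinh_add_mul_cosh_atTop {c : ℝ} (hc : -1 < c) :
    Tendsto (fun r => sinh r + c * cosh r) atTop atTop := by
  have hexp : Tendsto (fun r => (1 + c) / 2 * exp r) atTop atTop :=
    tendsto_exp_atTop.const_mul_atTop (by linarith)
  have hexp_neg : Tendsto (fun r => -((1 - c) / 2) * exp (-r)) atTop (𝓝 (-((1 - c) / 2) * 0)) :=
    tendsto_exp_neg_atTop_nhds_zero.const_mul _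
  refine (hexp.atTop_add hexp_neg).congr fun r => ?_
  rw [sinh_eq, cosh_eq]
  ring

theorem hyperbolic_angle_small_for_large_radius
    (Θ : ℝ) (hΘ : Θ ∈ Set.Ioo 0 π) :
    ∀ ε > 0, ∃ L > 0, ∀ ri rj : ℝ, 0 < ri → 0 < rj → ri > L →
      hθi Θ ri rj < ε := by
  obtain ⟨hΘ0, hΘπ⟩ := hΘ
  intro ε hε
  have hD : Tendsto (fun r => sinh r + cos Θ * cosh r) atTop atTop :=
    tendsto_sinh_add_mul_cosh_atTop
      (by simpa using cos_lt_cos_of_nonneg_of_le_pi hΘ0.le le_rfl hΘπ)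
  have hbound : Tendsto (fun r => sin Θ / (sinh r + cos Θ * cosh r)) atTop (𝓝 0) :=
    tendsto_const_nhds.div_atTop hD
  obtain ⟨L, hlarge⟩ := eventually_atTop.mp
    ((hD.eventually_gt_atTop 0).and (hbound.eventually (gt_mem_nhds hε)))
  refine ⟨max L 1, by positivity, fun ri rj hri hrj hriL => ?_⟩
  obtain ⟨hpos, hlt⟩ := hlarge ri (le_of_max_le_left hriL.le)
  exact (hθi_le (sin_nonneg_of_nonneg_of_le_pi hΘ0.le hΘπ.le) hri hrj hpos).trans_lt hlt
end

section
/- Suppose each u_i : [0,T) → ℝ is C¹ and |u_i'(t)| ≤ c₁ for all t ∈ [0,T) and all i, where c₁ > 0 is constant. Then with r_i(t) = e^{u_i(t)}, one has r_i(0) e^{−c₁ t} ≤ r_i(t) ≤ r_i(0) e^{c₁ t} for all t, and hence the solution of the Euclidean combinatorial Calabi flow extends to all of [0,∞). -/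
open Real Set

theorem euclidean_flow_a_priori_bounds
    (ι : Type*) (T c₁ : ℝ) (hc₁ : 0 < c₁)
    (u : ι → ℝ → ℝ) (u' : ι → ℝ → ℝ)
    (hu : ∀ i, ∀ t ∈ Ico (0 : ℝ) T, HasDerivAt (u i) (u' i t) t)
    (hbd : ∀ i, ∀ t ∈ Ico (0 : ℝ) T, |u' i t| ≤ c₁)
    (r : ι → ℝ → ℝ) (hr : ∀ i t, r i t = Real.exp (u i t)) :
    ∀ i, ∀ t ∈ Ico (0 : ℝ) T,
      r i 0 * Real.exp (-c₁ * t) ≤ r i t ∧ r i t ≤ r i 0 * Real.exp (c₁ * t) := by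
  intro i t ht
  obtain ⟨ht0, htT⟩ := ht
  have hsub : Icc (0:ℝ) t ⊆ Ico (0:ℝ) T := fun x hx => ⟨hx.1, lt_of_le_of_lt hx.2 htT⟩
  have key : ‖u i t - u i 0‖ ≤ c₁ * ‖t - 0‖ := by
    apply (convex_Icc (0:ℝ) t).norm_image_sub_le_of_norm_hasDerivWithin_le
      (f' := u' i)
      (fun x hx => (hu i x (hsub hx)).hasDerivWithinAt)
      (fun x hx => by simpa [Real.norm_eq_abs] using hbd i x (hsub hx))
      ⟨le_refl 0, ht0⟩ ⟨ht0, le_refl t⟩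
  rw [sub_zero, Real.norm_eq_abs, Real.norm_eq_abs, abs_of_nonneg ht0] at key
  have h1 : u i t - u i 0 ≤ c₁ * t := (abs_le.mp key).2
  have h2 : -(c₁ * t) ≤ u i t - u i 0 := (abs_le.mp key).1
  rw [hr, hr]
  constructor
  · rw [← Real.exp_add]
    apply Real.exp_le_exp.mpr
    nlinarith
  · rw [← Real.exp_add]
    apply Real.exp_le_exp.mpr
    linarith
end
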